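/- In K[x_1,y_1,z_1,x_2,y_2,z_2,x_3,y_3,z_3], the ideal generated by the three quadrics z_1 y_3 - x_1 z_3, z_2 x_3 - x_2 z_3, z_1 y_2 - y_1 z_2 equals the intersection of the ideal J = ⟨z_1 y_3 - x_1 z_3, z_2 x_3 - x_2 z_3, z_1 y_2 - y_1 z_2, x_1 y_2 x_3 - y_1 x_2 y_3⟩ with the ideal ⟨z_1, z_2, z_3⟩. -/
import Mathlib

open MvPolynomial

noncomputable section

variable (K : Type*) [Field K] [IsAlgClosed K]

abbrev S3 (K : Type*) [Field K] := MvPolynomial (Fin 3 × Fin 3) K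

def xv (i : Fin 3) : S3 K := X (i, 0)
def yv (i : Fin 3) : S3 K := X (i, 1)
def zv (i : Fin 3) : S3 K := X (i, 2)

namespace Stmt10Aux

variable {K : Type*} [Field K]

def φ : S3 K →ₐ[K] S3 K := aeval (fun v => if v.2 = 2 then 0 else X v)

lemma zv_mem (i : Fin 3) :
    zv K i ∈ Ideal.span {p : S3 K | p = zv K 0 ∨ p = zv K 1 ∨ p = zv K 2} :=
  Ideal.subset_span (by fin_cases i <;> simp [zv])

lemma sub_φ_mem (f : S3 K) :
    f - φ f ∈ Ideal.span {p : S3 K | p = zv K 0 ∨ p = zv K 1 ∨ p = zv K 2} := by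
  induction f using MvPolynomial.induction_on with
  | C a => simp [φ]
  | add p q hp hq =>
      have : p + q - φ (p + q) = (p - φ p) + (q - φ q) := by rw [map_add]; ring
      rw [this]; exact add_mem hp hq
  | mul_X p v hp =>
      by_cases h : v.2 = 2
      · have hx : (X v : S3 K) = zv K v.1 := by rw [zv, ← h]
        have : φ (p * X v) = 0 := by
          rw [map_mul, φ, aeval_X, if_pos h, mul_zero]
        rw [this, sub_zero, hx]
        exact Ideal.mul_mem_left _ _ (zv_mem v.1)
      · have : p * X v - φ (p * X v) = (p - φ p) * X v := by
          rw [map_mul, φ, aeval_X, if_neg h]; ring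
        rw [this]
        exact Ideal.mul_mem_right _ _ hp

lemma ker_sub :
    ∀ f : S3 K, φ f = 0 → f ∈ Ideal.span {p : S3 K | p = zv K 0 ∨ p = zv K 1 ∨ p = zv K 2} := by
  intro f hf
  have := sub_φ_mem (K := K) f
  rwa [hf, sub_zero] at this

lemma z_le_ker :
    Ideal.span {p : S3 K | p = zv K 0 ∨ p = zv K 1 ∨ p = zv K 2} ≤ RingHom.ker (φ (K := K)).toRingHom := by
  rw [Ideal.span_le]
  rintro p (rfl | rfl | rfl) <;> simp [RingHom.mem_ker, φ, zv]

end Stmt10Aux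

set_option maxHeartbeats 1600000 in
open Stmt10Aux in
/-- The three quadrics cut out the toric multiview variety for three coordinate cameras
plus the extra component `z₁ = z₂ = z₃ = 0`:
`⟨z₁y₃ - x₁z₃, z₂x₃ - x₂z₃, z₁y₂ - y₁z₂⟩ = J ∩ ⟨z₁,z₂,z₃⟩`. -/
theorem stmt10 :
    Ideal.span {p : S3 K |
        p = zv K 0 * yv K 2 - xv K 0 * zv K 2 ∨
        p = zv K 1 * xv K 2 - xv K 1 * zv K 2 ∨
        p = zv K 0 * yv K 1 - yv K 0 * zv K 1} =
      Ideal.span {p : S3 K |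
        p = zv K 0 * yv K 2 - xv K 0 * zv K 2 ∨
        p = zv K 1 * xv K 2 - xv K 1 * zv K 2 ∨
        p = zv K 0 * yv K 1 - yv K 0 * zv K 1 ∨
        p = xv K 0 * yv K 1 * xv K 2 - yv K 0 * xv K 1 * yv K 2} ⊓
      Ideal.span {p : S3 K | p = zv K 0 ∨ p = zv K 1 ∨ p = zv K 2} := by
  set q1 : S3 K := zv K 0 * yv K 2 - xv K 0 * zv K 2 with hq1
  set q2 : S3 K := zv K 1 * xv K 2 - xv K 1 * zv K 2 with hq2
  set q3 : S3 K := zv K 0 * yv K 1 - yv K 0 * zv K 1 with hq3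
  set g : S3 K := xv K 0 * yv K 1 * xv K 2 - yv K 0 * xv K 1 * yv K 2 with hg
  set I : Ideal (S3 K) := Ideal.span {p : S3 K | p = q1 ∨ p = q2 ∨ p = q3} with hI
  set Z : Ideal (S3 K) := Ideal.span {p : S3 K | p = zv K 0 ∨ p = zv K 1 ∨ p = zv K 2} with hZ
  have hq1I : q1 ∈ I := Ideal.subset_span (Or.inl rfl)
  have hq2I : q2 ∈ I := Ideal.subset_span (Or.inr (Or.inl rfl))
  have hq3I : q3 ∈ I := Ideal.subset_span (Or.inr (Or.inr rfl))
  have hIZ : I ≤ Z := by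
    rw [hI, Ideal.span_le]
    rintro p (rfl | rfl | rfl)
    · exact sub_mem (Ideal.mul_mem_right _ _ (zv_mem 0)) (Ideal.mul_mem_left _ _ (zv_mem 2))
    · exact sub_mem (Ideal.mul_mem_right _ _ (zv_mem 1)) (Ideal.mul_mem_left _ _ (zv_mem 2))
    · exact sub_mem (Ideal.mul_mem_right _ _ (zv_mem 0)) (Ideal.mul_mem_left _ _ (zv_mem 1))
  -- the J ideal as a sup
  have hset : {p : S3 K | p = q1 ∨ p = q2 ∨ p = q3 ∨ p = g} =
      {p : S3 K | p = q1 ∨ p = q2 ∨ p = q3} ∪ {g} := by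
    ext p; simp [Set.mem_union]; tauto
  have hφg : φ g = g := by simp [hg, φ, xv, yv, zv]
  have hgne : g ≠ 0 := by
    intro h
    have := congrArg (eval fun v : Fin 3 × Fin 3 => if v.1 = 0 ∧ v.2 = 1 then (0 : K) else 1) h
    simp [hg, xv, yv, zv] at this
  have hz0 : zv K 0 * g ∈ I := by
    have : zv K 0 * g = (xv K 0 * xv K 2) * q3 - (xv K 1 * yv K 0) * q1 + (xv K 0 * yv K 0) * q2 := by
      rw [hg, hq1, hq2, hq3]; ring
    rw [this]
    exact add_mem (sub_mem (Ideal.mul_mem_left _ _ hq3I) (Ideal.mul_mem_left _ _ hq1I))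
      (Ideal.mul_mem_left _ _ hq2I)
  have hz1 : zv K 1 * g ∈ I := by
    have : zv K 1 * g = (xv K 0 * yv K 1) * q2 + (xv K 1 * yv K 2) * q3 - (xv K 1 * yv K 1) * q1 := by
      rw [hg, hq1, hq2, hq3]; ring
    rw [this]
    exact sub_mem (add_mem (Ideal.mul_mem_left _ _ hq2I) (Ideal.mul_mem_left _ _ hq3I))
      (Ideal.mul_mem_left _ _ hq1I)
  have hz2 : zv K 2 * g ∈ I := by
    have : zv K 2 * g = (xv K 2 * yv K 2) * q3 - (xv K 2 * yv K 1) * q1 + (yv K 0 * yv K 2) * q2 := by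
      rw [hg, hq1, hq2, hq3]; ring
    rw [this]
    exact add_mem (sub_mem (Ideal.mul_mem_left _ _ hq3I) (Ideal.mul_mem_left _ _ hq1I))
      (Ideal.mul_mem_left _ _ hq2I)
  apply le_antisymm
  · refine le_inf (Ideal.span_mono ?_) hIZ
    rintro p (rfl | rfl | rfl)
    · exact Or.inl rfl
    · exact Or.inr (Or.inl rfl)
    · exact Or.inr (Or.inr (Or.inl rfl))
  · rintro f ⟨hfJ, hfZ⟩
    rw [hset, Ideal.span_union] at hfJ
    obtain ⟨p, hp, q, hq, hpq⟩ := Submodule.mem_sup.mp hfJ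
    obtain ⟨c, rfl⟩ := Ideal.mem_span_singleton'.mp hq
    have hcgZ : c * g ∈ Z := by
      have : c * g = f - p := by rw [← hpq]; ring
      rw [this]; exact sub_mem hfZ (hIZ hp)
    have hφc : φ c = 0 := by
      have h0 : φ (c * g) = 0 := z_le_ker hcgZ
      rw [map_mul, hφg] at h0
      rcases mul_eq_zero.mp h0 with h | h
      · exact h
      · exact absurd h hgne
    have hcZ : c ∈ Z := ker_sub c hφc
    have hcgI : c * g ∈ I := by
      refine Submodule.span_induction (p := fun x _ => x * g ∈ I) ?_ ?_ ?_ ?_ hcZ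
      · rintro x (rfl | rfl | rfl)
        · exact hz0
        · exact hz1
        · exact hz2
      · simp
      · intro x y _ _ hx hy
        have : (x + y) * g = x * g + y * g := by ring
        rw [this]; exact add_mem hx hy
      · intro a x _ hx
        rw [smul_mul_assoc]
        exact Submodule.smul_mem _ _ hx
    rw [← hpq]
    exact add_mem hp hcgI

end
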